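/- arXiv:0902.0623 — 3 statements merged into one kernel-verified Lean document; each statement's English description precedes it below -/
import Mathlib

section
/- Let A be an implication sublattice of B with least element a := min A. Then μ(A, B) = (−1)^{|a|} · |a|! · μ(A, [a,1]), where μ is the Möbius function of the finite lattice 𝒜 and |a| is the number of atoms of B below a. -/
/-!
Write `𝒜 t` for the implication sublattices of the Boolean algebra `[⊥, t]`, in which `x` has
complement `t \ x`. A sublattice `C ∈ 𝒜 t` containing `a` is determined by its traces
`{x ⊓ a | x ∈ C} ∈ 𝒜 a` and `{x ⊔ a | x ∈ C} ⊆ [a, t]`, and any two such traces occur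
together. Hence, if `A` has least element `a`, the interval `[A, ⊤]` of `𝒜 t` is isomorphic to
`𝒜 a × [A, [a, t]]`, and `μ(A, ⊤) = χ(a) · μ(A, [a, t])` where `χ(a) = μ(⊥, ⊤)` in `𝒜 a`.

Summing `μ(C, ⊤)` over all `C ∈ 𝒜 t` and grouping by the least element `c` of `C`, the fibre
over `c` is the interval `[{c, t}, [c, t]]`, so its contribution is `χ(c)` if `c ⩿ t` and `0`
otherwise. This gives `χ(t) = -∑_{c ⋖ t} χ(c)`; since `t` has `|t|` lower covers, each with
`|t| - 1` atoms below it, `χ(t) = (-1)^|t| |t|!`.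
-/

open scoped Classical

noncomputable section

/-- An implication sublattice of a Boolean algebra `B`: a nonempty subset closed under
the implication `x → y := xᶜ ⊔ y` and under meet. -/
def IsImplSublattice {B : Type*} [BooleanAlgebra B] (A : Set B) : Prop :=
  A.Nonempty ∧ (∀ x ∈ A, ∀ y ∈ A, xᶜ ⊔ y ∈ A) ∧ (∀ x ∈ A, ∀ y ∈ A, x ⊓ y ∈ A)

/-- A Boolean subalgebra of `B`: a subset containing `⊥` and `⊤`, closed under
join, meet and complement. -/
def IsBoolSubalgebra {B : Type*} [BooleanAlgebra B] (C : Set B) : Prop :=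
  (⊥ : B) ∈ C ∧ (⊤ : B) ∈ C ∧ (∀ x ∈ C, ∀ y ∈ C, x ⊔ y ∈ C) ∧
    (∀ x ∈ C, ∀ y ∈ C, x ⊓ y ∈ C) ∧ (∀ x ∈ C, xᶜ ∈ C)

/-- The lattice `𝒜` of implication sublattices of `B`, ordered by inclusion. -/
abbrev ImplLat (B : Type*) [BooleanAlgebra B] : Type _ := {A : Set B // IsImplSublattice A}

/-- Any finite preorder is locally finite. -/
instance (priority := 100) fintypeLocallyFinite {X : Type*} [Fintype X] [Preorder X] :
    LocallyFiniteOrder X :=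
  Fintype.toLocallyFiniteOrder

lemma isImplSublattice_univ {B : Type*} [BooleanAlgebra B] :
    IsImplSublattice (Set.univ : Set B) :=
  ⟨⟨⊤, trivial⟩, fun _ _ _ _ => trivial, fun _ _ _ _ => trivial⟩

lemma isImplSublattice_Ici {B : Type*} [BooleanAlgebra B] (c : B) :
    IsImplSublattice (Set.Ici c) :=
  ⟨⟨c, le_refl c⟩, fun _ _ _ hy => le_sup_of_le_right hy, fun _ hx _ hy => le_inf hx hy⟩

lemma isImplSublattice_singleton_top {B : Type*} [BooleanAlgebra B] :
    IsImplSublattice ({⊤} : Set B) := by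
  refine ⟨⟨⊤, rfl⟩, ?_, ?_⟩ <;> intro x hx y hy <;> simp_all

/-- `|x|`: the number of atoms of `B` lying below `x`. -/
def natomsBelow {B : Type*} [BooleanAlgebra B] [Fintype B] (x : B) : ℕ :=
  (Finset.univ.filter fun c : B => IsAtom c ∧ c ≤ x).card

open Finset IncidenceAlgebra

namespace IncidenceAlgebra

variable {𝕜 α β : Type*} [AddCommGroup 𝕜] [One 𝕜] [PartialOrder α] [PartialOrder β]
  [LocallyFiniteOrder α] [LocallyFiniteOrder β] [DecidableEq α] [DecidableEq β]

theorem mu_orderEmbedding_apply (f : α ↪o β) (hf : (Set.range f).OrdConnected) (a b : α) :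
    mu 𝕜 (f a) (f b) = mu 𝕜 a b := by
  induction hn : #(Icc a b) using Nat.strong_induction_on generalizing b with
  | _ n ih =>
    obtain rfl | hab := eq_or_ne a b
    · simp
    have hIco : Ico (f a) (f b) = (Ico a b).map f.toEmbedding := by
      ext c
      simp only [mem_Ico, mem_map, RelEmbedding.coe_toEmbedding]
      constructor
      · rintro ⟨hac, hcb⟩
        obtain ⟨x, rfl⟩ := hf.out ⟨a, rfl⟩ ⟨b, rfl⟩ ⟨hac, hcb.le⟩
        exact ⟨x, ⟨f.le_iff_le.1 hac, f.lt_iff_lt.1 hcb⟩, rfl⟩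
      · rintro ⟨x, ⟨hax, hxb⟩, rfl⟩
        exact ⟨f.le_iff_le.2 hax, f.lt_iff_lt.2 hxb⟩
    rw [mu_eq_neg_sum_Ico_of_ne hab, mu_eq_neg_sum_Ico_of_ne (f.injective.ne hab), hIco, sum_map]
    refine congrArg _ (sum_congr rfl fun x hx => ih _ ?_ x rfl)
    obtain ⟨hax, hxb⟩ := mem_Ico.1 hx
    exact hn ▸ card_lt_card (Icc_ssubset_Icc_right (hax.trans hxb.le) le_rfl hxb)

theorem mu_orderIso_apply (e : α ≃o β) (a b : α) : mu 𝕜 (e a) (e b) = mu 𝕜 a b :=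
  mu_orderEmbedding_apply e.toOrderEmbedding (by simp [Set.ordConnected_univ]) a b

theorem mu_coe {s : Set α} (hs : s.OrdConnected) [LocallyFiniteOrder s] (a b : s) :
    mu 𝕜 (a : α) b = mu 𝕜 a b :=
  mu_orderEmbedding_apply (OrderEmbedding.subtype _) (by simpa using hs) a b

end IncidenceAlgebra

section GeneralizedBooleanAlgebra

variable {B : Type*} [GeneralizedBooleanAlgebra B] {t a c x y : B} {C D E : Set B}

theorem sdiff_sdiff_sup_sup (h : x ≤ t) (y : B) : t \ (t \ x ⊔ y) ⊔ y = x ⊔ y := by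
  rw [← sdiff_sdiff_left, sdiff_sdiff_right_self, inf_eq_right.2 h, sdiff_sup_self]

theorem sdiff_sup_inf_right (hat : a ≤ t) (x y : B) :
    (t \ x ⊔ y) ⊓ a = a \ (x ⊓ a) ⊔ y ⊓ a := by
  rw [inf_sup_right, sdiff_inf_self_right, inf_comm, ← inf_sdiff_assoc, inf_eq_left.2 hat]

theorem sdiff_sup_sup_right (t x y a : B) : t \ x ⊔ y ⊔ a = t \ (x ⊔ a) ⊔ (y ⊔ a) := by
  rw [← sdiff_sdiff_left, ← sup_assoc, sup_right_comm ((t \ x) \ a), sdiff_sup_self,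
    sup_right_comm]

theorem sup_inf_sdiff_sup_inf (hx : x ≤ t) (hat : a ≤ t) : (x ⊔ a) ⊓ (t \ a ⊔ x ⊓ a) = x := by
  rw [sup_comm (t \ a), inf_sup_left, inf_eq_right.2 (inf_le_left.trans le_sup_left),
    ← inf_sdiff_assoc, inf_eq_left.2 (sup_le hx hat), sup_sdiff_right_self,
    sup_inf_sdiff]

/-- The implication sublattices of the Boolean algebra `[⊥, t]`, where `x` has complement
`t \ x`. -/
structure IsRelImplSublattice (t : B) (D : Set B) : Prop where
  nonempty : D.Nonempty
  subset_Iic : D ⊆ Set.Iic t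
  sdiff_sup_mem : ∀ x ∈ D, ∀ y ∈ D, t \ x ⊔ y ∈ D
  inf_mem : ∀ x ∈ D, ∀ y ∈ D, x ⊓ y ∈ D

abbrev RelImplLat (t : B) : Type _ := {D : Set B // IsRelImplSublattice t D}

namespace IsRelImplSublattice

theorem top_mem (hD : IsRelImplSublattice t D) : t ∈ D := by
  obtain ⟨x, hx⟩ := hD.nonempty
  simpa [sdiff_sup_cancel (hD.subset_Iic hx)] using hD.sdiff_sup_mem x hx x hx

theorem sup_mem (hD : IsRelImplSublattice t D) (hx : x ∈ D) (hy : y ∈ D) : x ⊔ y ∈ D := by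
  simpa [sdiff_sdiff_sup_sup (hD.subset_Iic hx)] using
    hD.sdiff_sup_mem _ (hD.sdiff_sup_mem x hx y hy) y hy

theorem image_inf (hat : a ≤ t) (hC : IsRelImplSublattice t C) :
    IsRelImplSublattice a ((· ⊓ a) '' C) where
  nonempty := hC.nonempty.image _
  subset_Iic := by
    rintro _ ⟨x, -, rfl⟩
    exact inf_le_right
  sdiff_sup_mem := by
    rintro _ ⟨x, hx, rfl⟩ _ ⟨y, hy, rfl⟩
    exact ⟨t \ x ⊔ y, hC.sdiff_sup_mem x hx y hy, sdiff_sup_inf_right hat x y⟩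
  inf_mem := by
    rintro _ ⟨x, hx, rfl⟩ _ ⟨y, hy, rfl⟩
    exact ⟨x ⊓ y, hC.inf_mem x hx y hy, inf_inf_distrib_right x y a⟩

theorem image_sup (hat : a ≤ t) (hC : IsRelImplSublattice t C) :
    IsRelImplSublattice t ((· ⊔ a) '' C) where
  nonempty := hC.nonempty.image _
  subset_Iic := by
    rintro _ ⟨x, hx, rfl⟩
    exact sup_le (hC.subset_Iic hx) hat
  sdiff_sup_mem := by
    rintro _ ⟨x, hx, rfl⟩ _ ⟨y, hy, rfl⟩
    exact ⟨t \ x ⊔ y, hC.sdiff_sup_mem x hx y hy, sdiff_sup_sup_right t x y a⟩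
  inf_mem := by
    rintro _ ⟨x, hx, rfl⟩ _ ⟨y, hy, rfl⟩
    exact ⟨x ⊓ y, hC.inf_mem x hx y hy, sup_inf_right x y a⟩

theorem preimage_inter (hat : a ≤ t) (hD : IsRelImplSublattice a D)
    (hE : IsRelImplSublattice t E) :
    IsRelImplSublattice t ((· ⊓ a) ⁻¹' D ∩ (· ⊔ a) ⁻¹' E) where
  nonempty := ⟨t, by
    simpa [inf_eq_right.2 hat, sup_eq_left.2 hat] using ⟨hD.top_mem, hE.top_mem⟩⟩
  subset_Iic x hx := le_sup_left.trans (hE.subset_Iic hx.2)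
  sdiff_sup_mem := by
    rintro x ⟨hxD, hxE⟩ y ⟨hyD, hyE⟩
    constructor
    · show (t \ x ⊔ y) ⊓ a ∈ D
      rw [sdiff_sup_inf_right hat]
      exact hD.sdiff_sup_mem _ hxD _ hyD
    · show t \ x ⊔ y ⊔ a ∈ E
      rw [sdiff_sup_sup_right]
      exact hE.sdiff_sup_mem _ hxE _ hyE
  inf_mem := by
    rintro x ⟨hxD, hxE⟩ y ⟨hyD, hyE⟩
    constructor
    · show x ⊓ y ⊓ a ∈ D
      rw [inf_inf_distrib_right]
      exact hD.inf_mem _ hxD _ hyD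
    · show x ⊓ y ⊔ a ∈ E
      rw [sup_inf_right]
      exact hE.inf_mem _ hxE _ hyE

end IsRelImplSublattice

theorem isRelImplSublattice_Iic (t : B) : IsRelImplSublattice t (Set.Iic t) where
  nonempty := ⟨t, le_rfl⟩
  subset_Iic := le_rfl
  sdiff_sup_mem _ _ _ hy := sup_le sdiff_le hy
  inf_mem _ hx _ _ := inf_le_left.trans hx

theorem isRelImplSublattice_Icc (h : c ≤ t) : IsRelImplSublattice t (Set.Icc c t) where
  nonempty := ⟨t, h, le_rfl⟩
  subset_Iic _ hx := hx.2
  sdiff_sup_mem _ _ _ hy := ⟨hy.1.trans le_sup_right, sup_le sdiff_le hy.2⟩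
  inf_mem _ hx _ hy := ⟨le_inf hx.1 hy.1, inf_le_left.trans hx.2⟩

theorem isRelImplSublattice_pair (h : c ≤ t) : IsRelImplSublattice t {c, t} where
  nonempty := ⟨t, by simp⟩
  subset_Iic := by simp [Set.insert_subset_iff, h]
  sdiff_sup_mem := by
    rintro x (rfl | rfl) y (rfl | rfl) <;> simp [sdiff_sup_cancel h, h]
  inf_mem := by
    rintro x (rfl | rfl) y (rfl | rfl) <;> simp [h]

instance : BoundedOrder (RelImplLat t) where
  top := ⟨Set.Iic t, isRelImplSublattice_Iic t⟩
  le_top D := D.2.subset_Iic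
  bot := ⟨{t}, by simpa using isRelImplSublattice_pair (le_refl t)⟩
  bot_le D := Set.singleton_subset_iff.2 D.2.top_mem

namespace RelImplLat

def pair (h : c ≤ t) : RelImplLat t := ⟨{c, t}, isRelImplSublattice_pair h⟩

def Icc (h : c ≤ t) : RelImplLat t := ⟨Set.Icc c t, isRelImplSublattice_Icc h⟩

theorem isLeast_iff_mem_Icc {D : RelImplLat t} (h : c ≤ t) :
    IsLeast D.1 c ↔ D ∈ Set.Icc (pair h) (Icc h) := by
  refine ⟨fun hc => ⟨?_, fun x hx => ⟨hc.2 hx, D.2.subset_Iic hx⟩⟩,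
    fun hD => ⟨hD.1 (Set.mem_insert c _), fun x hx => (hD.2 hx).1⟩⟩
  exact Set.insert_subset_iff.2 ⟨hc.1, Set.singleton_subset_iff.2 D.2.top_mem⟩

theorem pair_eq_Icc_iff (h : c ≤ t) : pair h = Icc h ↔ c ⩿ t := by
  refine ⟨fun he => wcovBy_iff_le_and_eq_or_eq.2 ⟨h, fun x hcx hxt => ?_⟩,
    fun hct => Subtype.ext hct.Icc_eq.symm⟩
  have hx : x ∈ (Icc h).1 := ⟨hcx, hxt⟩
  rw [← he] at hx
  exact (Set.mem_insert_iff.1 hx).imp_right Set.mem_singleton_iff.1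

theorem bot_ne_top (ht : t ≠ ⊥) : (⊥ : RelImplLat t) ≠ ⊤ := by
  intro h
  have hbot : (⊥ : B) ∈ (⊥ : RelImplLat t).1 := h ▸ bot_le
  exact ht (Set.mem_singleton_iff.1 hbot).symm

end RelImplLat

theorem preimage_image_inf_inter_preimage_image_sup (hat : a ≤ t)
    (hC : IsRelImplSublattice t C) (haC : a ∈ C) :
    (· ⊓ a) ⁻¹' ((· ⊓ a) '' C) ∩ (· ⊔ a) ⁻¹' ((· ⊔ a) '' C) = C := by
  refine Set.Subset.antisymm ?_ fun x hx => ⟨⟨x, hx, rfl⟩, ⟨x, hx, rfl⟩⟩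
  rintro x ⟨⟨u, hu, hux : u ⊓ a = x ⊓ a⟩, ⟨v, hv, hvx : v ⊔ a = x ⊔ a⟩⟩
  have hxt : x ≤ t := le_sup_left.trans (hvx ▸ sup_le (hC.subset_Iic hv) hat)
  rw [← sup_inf_sdiff_sup_inf hxt hat, ← hux, ← hvx]
  exact hC.inf_mem _ (hC.sup_mem hv haC) _
    (hC.sdiff_sup_mem _ haC _ (hC.inf_mem _ hu _ haC))

theorem image_inf_preimage_inter (hat : a ≤ t) (hD : D ⊆ Set.Iic a) (htE : t ∈ E) :
    (· ⊓ a) '' ((· ⊓ a) ⁻¹' D ∩ (· ⊔ a) ⁻¹' E) = D := by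
  refine Set.Subset.antisymm (by rintro _ ⟨x, hx, rfl⟩; exact hx.1) fun d hd => ?_
  have hda : d ≤ a := hD hd
  have hinf : (d ⊔ t \ a) ⊓ a = d := by
    rw [inf_sup_right, inf_sdiff_self_left, sup_bot_eq, inf_eq_left.2 hda]
  have hsup : d ⊔ t \ a ⊔ a = t := by
    rw [sup_assoc, sdiff_sup_self, sup_eq_left.2 hat, sup_eq_right.2 (hda.trans hat)]
  exact ⟨d ⊔ t \ a, ⟨by simpa [hinf], by simpa [hsup]⟩, hinf⟩

theorem image_sup_preimage_inter (haD : a ∈ D) (hE : E ⊆ Set.Ici a) :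
    (· ⊔ a) '' ((· ⊓ a) ⁻¹' D ∩ (· ⊔ a) ⁻¹' E) = E := by
  refine Set.Subset.antisymm (by rintro _ ⟨x, hx, rfl⟩; exact hx.2) fun y hy => ?_
  have hay : a ≤ y := hE hy
  exact ⟨y, ⟨by simpa [inf_eq_right.2 hay], by simpa [sup_eq_left.2 hay]⟩,
    sup_eq_left.2 hay⟩

namespace RelImplLat

def splitAt (hat : a ≤ t) :
    Set.Ici (pair hat) ≃o RelImplLat a × Set.Icc (pair hat) (Icc hat) where
  toFun C :=
    (⟨(· ⊓ a) '' C.1.1, C.1.2.image_inf hat⟩,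
      ⟨⟨(· ⊔ a) '' C.1.1, C.1.2.image_sup hat⟩,
        Set.insert_subset_iff.2 ⟨⟨a, C.2 (Set.mem_insert a _), sup_idem a⟩,
          Set.singleton_subset_iff.2 ⟨t, C.1.2.top_mem, sup_eq_left.2 hat⟩⟩,
        by rintro _ ⟨x, hx, rfl⟩; exact ⟨le_sup_right, sup_le (C.1.2.subset_Iic hx) hat⟩⟩)
  invFun P :=
    ⟨⟨(· ⊓ a) ⁻¹' P.1.1 ∩ (· ⊔ a) ⁻¹' P.2.1.1, .preimage_inter hat P.1.2 P.2.1.2⟩,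
      Set.insert_subset_iff.2
        ⟨⟨by simpa using P.1.2.top_mem, by simpa using P.2.2.1 (Set.mem_insert a _)⟩,
          Set.singleton_subset_iff.2 ⟨by simpa [inf_eq_right.2 hat] using P.1.2.top_mem,
            by simpa [sup_eq_left.2 hat] using P.2.1.2.top_mem⟩⟩⟩
  left_inv C := Subtype.ext <| Subtype.ext <|
    preimage_image_inf_inter_preimage_image_sup hat C.1.2 (C.2 (Set.mem_insert a _))
  right_inv P := Prod.ext
    (Subtype.ext <| image_inf_preimage_inter hat P.1.2.subset_Iic P.2.1.2.top_mem)
    (Subtype.ext <| Subtype.ext <| image_sup_preimage_inter P.1.2.top_mem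
      fun _ hy => (P.2.2.2 hy).1)
  map_rel_iff' {C C'} := by
    refine ⟨fun h => ?_, fun h => ⟨Set.image_mono h, Set.image_mono h⟩⟩
    change C.1.1 ⊆ C'.1.1
    rw [← preimage_image_inf_inter_preimage_image_sup hat C.1.2 (C.2 (Set.mem_insert a _)),
      ← preimage_image_inf_inter_preimage_image_sup hat C'.1.2 (C'.2 (Set.mem_insert a _))]
    exact Set.inter_subset_inter (Set.preimage_mono h.1) (Set.preimage_mono h.2)

end RelImplLat

end GeneralizedBooleanAlgebra

section Finite

variable {B 𝕜 : Type*} [GeneralizedBooleanAlgebra B] [Fintype B] [Ring 𝕜] {t a : B}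

namespace RelImplLat

theorem mu_top_eq_eulerChar_mul {A : RelImplLat t} (ha : IsLeast A.1 a) :
    mu 𝕜 A ⊤ = eulerChar 𝕜 (RelImplLat a) * mu 𝕜 A (Icc (A.2.subset_Iic ha.1)) := by
  have hat : a ≤ t := A.2.subset_Iic ha.1
  have hA : A ∈ Set.Icc (pair hat) (Icc hat) := (isLeast_iff_mem_Icc hat).1 ha
  have htop : ⊤ ∈ Set.Ici (pair hat) := Set.mem_Ici.2 le_top
  have hIcc : Icc hat ∈ Set.Icc (pair hat) (Icc hat) := ⟨hA.1.trans hA.2, le_rfl⟩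
  have hAsplit : splitAt hat ⟨A, hA.1⟩ = (⊥, ⟨A, hA⟩) := by
    refine Prod.ext (Subtype.ext ?_) (Subtype.ext (Subtype.ext ?_))
    · exact (Set.image_congr fun y hy => inf_eq_right.2 (ha.2 hy)).trans
        (Set.Nonempty.image_const ⟨a, ha.1⟩ a)
    · exact (Set.image_congr fun y hy => sup_eq_left.2 (ha.2 hy)).trans (Set.image_id' _)
  have htopsplit : splitAt hat ⟨⊤, htop⟩ = (⊤, ⟨Icc hat, hIcc⟩) := by
    refine Prod.ext (Subtype.ext (Set.ext fun z => ?_))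
      (Subtype.ext (Subtype.ext (Set.ext fun z => ?_)))
    · exact ⟨by rintro ⟨x, -, rfl⟩; exact inf_le_right,
        fun hz => ⟨z, hz.trans hat, inf_eq_left.2 hz⟩⟩
    · exact ⟨by rintro ⟨x, hx, rfl⟩; exact ⟨le_sup_right, sup_le hx hat⟩,
        fun hz => ⟨z, hz.2, sup_eq_left.2 hz.1⟩⟩
  calc mu 𝕜 A ⊤ = mu 𝕜 (⟨A, hA.1⟩ : Set.Ici (pair hat)) ⟨⊤, htop⟩ :=
        mu_coe Set.ordConnected_Ici ⟨A, hA.1⟩ ⟨⊤, htop⟩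
    _ = mu 𝕜 (splitAt hat ⟨A, hA.1⟩) (splitAt hat ⟨⊤, htop⟩) :=
        (mu_orderIso_apply _ _ _).symm
    _ = eulerChar 𝕜 (RelImplLat a) *
          mu 𝕜 (⟨A, hA⟩ : Set.Icc (pair hat) (Icc hat)) ⟨Icc hat, hIcc⟩ := by
        rw [hAsplit, htopsplit, ← mu_prod_mu, IncidenceAlgebra.prod_mk, eulerChar]
    _ = _ := by rw [← mu_coe Set.ordConnected_Icc]

def least (D : RelImplLat t) : B :=
  D.1.toFinset.inf' (Set.toFinset_nonempty.2 D.2.nonempty) id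

theorem isLeast_least (D : RelImplLat t) : IsLeast D.1 D.least :=
  ⟨Finset.inf'_mem D.1 D.2.inf_mem _ _ id fun _ hi => Set.mem_toFinset.1 hi,
    fun _ hx => Finset.inf'_le id (Set.mem_toFinset.2 hx)⟩

theorem sum_mu_top_of_least_eq (c : B) :
    ∑ C : RelImplLat t with C.least = c, mu 𝕜 C ⊤ =
      if c ⩿ t then eulerChar 𝕜 (RelImplLat c) else 0 := by
  by_cases hct : c ≤ t
  swap
  · rw [if_neg fun h => hct h.le]
    refine sum_eq_zero fun C hC => absurd ?_ hct
    exact ((mem_filter_univ C).1 hC) ▸ C.2.subset_Iic (isLeast_least C).1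
  have hIcc {C : RelImplLat t} : C ∈ Finset.Icc (pair hct) (Icc hct) ↔ IsLeast C.1 c := by
    rw [Finset.mem_Icc, ← Set.mem_Icc, isLeast_iff_mem_Icc hct]
  have hfiber : filter (·.least = c) univ = Finset.Icc (pair hct) (Icc hct) := by
    ext C
    rw [mem_filter_univ, hIcc]
    exact ⟨fun h => h ▸ isLeast_least C, (isLeast_least C).unique⟩
  calc ∑ C : RelImplLat t with C.least = c, mu 𝕜 C ⊤
      = ∑ C ∈ Finset.Icc (pair hct) (Icc hct),
          eulerChar 𝕜 (RelImplLat c) * mu 𝕜 C (Icc hct) := by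
        rw [hfiber]
        exact sum_congr rfl fun C hC => mu_top_eq_eulerChar_mul (hIcc.1 hC)
    _ = _ := by
        rw [← mul_sum, sum_Icc_mu_left]
        simp only [pair_eq_Icc_iff, mul_ite, mul_one, mul_zero]

theorem sum_eulerChar_wcovBy (ht : t ≠ ⊥) :
    ∑ c with c ⩿ t, eulerChar 𝕜 (RelImplLat c) = 0 := by
  calc ∑ c with c ⩿ t, eulerChar 𝕜 (RelImplLat c)
      = ∑ c : B, ∑ C : RelImplLat t with C.least = c, mu 𝕜 C ⊤ := by
        rw [sum_filter]
        exact sum_congr rfl fun c _ => (sum_mu_top_of_least_eq c).symm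
    _ = ∑ C ∈ Finset.Icc (⊥ : RelImplLat t) ⊤, mu 𝕜 C ⊤ := by
        rw [Finset.Icc_bot_top]
        exact sum_fiberwise_of_maps_to (fun _ _ => mem_univ _) _
    _ = 0 := by rw [sum_Icc_mu_left, if_neg (bot_ne_top ht)]

theorem eulerChar_eq_neg_sum_covBy (ht : t ≠ ⊥) :
    eulerChar 𝕜 (RelImplLat t) = -∑ c with c ⋖ t, eulerChar 𝕜 (RelImplLat c) := by
  have h := sum_eulerChar_wcovBy (𝕜 := 𝕜) ht
  have hsplit : filter (· ⩿ t) univ = insert t (filter (· ⋖ t) univ) := by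
    ext c
    simp [wcovBy_iff_eq_or_covBy]
  rw [hsplit, sum_insert (by simp)] at h
  exact eq_neg_of_add_eq_zero_left h

end RelImplLat

end Finite

section Atoms

variable {B : Type*} {c t : B}

theorem covBy_iff_isAtom_sdiff [GeneralizedBooleanAlgebra B] (h : c ≤ t) :
    c ⋖ t ↔ IsAtom (t \ c) := by
  constructor
  · intro hct
    refine ⟨fun h0 => hct.lt.not_ge (sdiff_eq_bot_iff.1 h0), fun b hb => ?_⟩
    have hbc : Disjoint b c := disjoint_sdiff_self_left.mono_left hb.le
    rcases hct.wcovBy.eq_or_eq le_sup_left (sup_le h (hb.le.trans sdiff_le)) with hcb | hcb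
    · exact hbc.eq_bot_of_le (hcb ▸ le_sup_right)
    · refine absurd ?_ hb.not_ge
      rw [← hcb, sup_sdiff_left_self]
      exact sdiff_le
  · intro hat
    refine ⟨lt_of_le_of_ne h fun hct => hat.1 (hct ▸ sdiff_self), fun x hcx hxt => ?_⟩
    rcases hat.le_iff.1 (sdiff_le_sdiff_right hxt.le) with hx | hx
    · exact hcx.not_ge (sdiff_eq_bot_iff.1 hx)
    · exact hxt.ne (by rw [← sup_sdiff_cancel_right hcx.le, hx, sup_sdiff_cancel_right h])

variable [BooleanAlgebra B] [Fintype B]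

theorem natomsBelow_eq_zero_iff : natomsBelow t = 0 ↔ t = ⊥ := by
  rw [natomsBelow, card_eq_zero, filter_eq_empty_iff]
  refine ⟨fun h => (eq_bot_or_exists_atom_le t).resolve_right ?_, ?_⟩
  · rintro ⟨s, hs, hst⟩
    exact h (mem_univ s) ⟨hs, hst⟩
  · rintro rfl s - ⟨hs, hsb⟩
    exact hs.1 (le_bot_iff.1 hsb)

theorem natomsBelow_eq_succ_of_covBy (h : c ⋖ t) : natomsBelow t = natomsBelow c + 1 := by
  have hat : IsAtom (t \ c) := (covBy_iff_isAtom_sdiff h.le).1 h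
  have hnot : t \ c ∉ filter (fun s => IsAtom s ∧ s ≤ c) univ := fun hmem =>
    hat.1 (disjoint_sdiff_self_left.eq_bot_of_le ((mem_filter_univ _).1 hmem).2)
  rw [natomsBelow, natomsBelow, ← card_cons hnot]
  congr 1
  ext s
  simp only [mem_cons, mem_filter_univ]
  constructor
  · rintro ⟨hs, hst⟩
    by_cases hsc : s ≤ c
    · exact Or.inr ⟨hs, hsc⟩
    · have hle : s ≤ t \ c := le_sdiff.2 ⟨hst, hs.not_le_iff_disjoint.1 hsc⟩
      exact Or.inl ((hat.le_iff.1 hle).resolve_left hs.1)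
  · rintro (rfl | ⟨hs, hsc⟩)
    exacts [⟨hat, sdiff_le⟩, ⟨hs, hsc.trans h.le⟩]

theorem card_covBy (t : B) : #{c | c ⋖ t} = natomsBelow t := by
  refine card_nbij' (t \ ·) (t \ ·) ?_ ?_ ?_ ?_
  · intro c hc
    have hc : c ⋖ t := (mem_filter_univ c).1 hc
    exact (mem_filter_univ _).2 ⟨(covBy_iff_isAtom_sdiff hc.le).1 hc, sdiff_le⟩
  · intro s hs
    obtain ⟨hs, hst⟩ := (mem_filter_univ s).1 hs
    refine (mem_filter_univ _).2 ((covBy_iff_isAtom_sdiff sdiff_le).2 ?_)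
    rwa [sdiff_sdiff_eq_self hst]
  · intro c hc
    exact sdiff_sdiff_eq_self ((mem_filter_univ c).1 hc).le
  · intro s hs
    exact sdiff_sdiff_eq_self ((mem_filter_univ s).1 hs).2

theorem eulerChar_relImplLat {𝕜 : Type*} [CommRing 𝕜] (t : B) :
    eulerChar 𝕜 (RelImplLat t) = (-1) ^ natomsBelow t * (natomsBelow t).factorial := by
  induction hn : natomsBelow t generalizing t with
  | zero =>
    obtain rfl := natomsBelow_eq_zero_iff.1 hn
    have h : (⊥ : RelImplLat (⊥ : B)) = ⊤ := Subtype.ext Set.Iic_bot.symm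
    rw [eulerChar, h, mu_self]
    simp
  | succ n ih =>
    have ht : t ≠ ⊥ := fun h => by simp [natomsBelow_eq_zero_iff.2 h] at hn
    have hcov : ∀ c ∈ filter (· ⋖ t) univ,
        eulerChar 𝕜 (RelImplLat c) = (-1) ^ n * (n.factorial : 𝕜) := by
      intro c hc
      have hct : c ⋖ t := (mem_filter_univ c).1 hc
      exact ih c (Nat.succ_injective ((natomsBelow_eq_succ_of_covBy hct).symm.trans hn))
    rw [RelImplLat.eulerChar_eq_neg_sum_covBy ht, sum_congr rfl hcov, sum_const, card_covBy, hn,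
      nsmul_eq_mul, Nat.factorial_succ]
    push_cast
    ring

end Atoms

section Top

variable {B : Type*} [BooleanAlgebra B]

theorem isRelImplSublattice_top_iff {S : Set B} :
    IsRelImplSublattice (⊤ : B) S ↔ IsImplSublattice S := by
  refine ⟨fun h => ⟨h.nonempty, ?_, h.inf_mem⟩,
    fun ⟨hne, himp, hinf⟩ => ⟨hne, fun _ _ => le_top, ?_, hinf⟩⟩
  · simpa only [top_sdiff] using h.sdiff_sup_mem
  · simpa only [top_sdiff] using himp

def implLatEquivRelImplLat : ImplLat B ≃o RelImplLat (⊤ : B) where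
  toFun A := ⟨A.1, isRelImplSublattice_top_iff.2 A.2⟩
  invFun D := ⟨D.1, isRelImplSublattice_top_iff.1 D.2⟩
  left_inv _ := rfl
  right_inv _ := rfl
  map_rel_iff' := Iff.rfl

end Top

theorem mu_top_eq_sign_factorial_mul_general {B : Type*} [Fintype B] [BooleanAlgebra B]
    (A : Set B) (hA : IsImplSublattice A) (a : B) (ha : IsLeast A a) :
    IncidenceAlgebra.mu ℤ (⟨A, hA⟩ : ImplLat B) ⟨Set.univ, isImplSublattice_univ⟩ =
      (-1 : ℤ) ^ natomsBelow a * (natomsBelow a).factorial *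
        IncidenceAlgebra.mu ℤ (⟨A, hA⟩ : ImplLat B) ⟨Set.Ici a, isImplSublattice_Ici a⟩ := by
  let e : ImplLat B ≃o RelImplLat (⊤ : B) := implLatEquivRelImplLat
  have htop : e ⟨Set.univ, isImplSublattice_univ⟩ = ⊤ := Subtype.ext Set.Iic_top.symm
  have hIci : e ⟨Set.Ici a, isImplSublattice_Ici a⟩ = RelImplLat.Icc le_top :=
    Subtype.ext Set.Icc_top.symm
  rw [← mu_orderIso_apply e, htop, RelImplLat.mu_top_eq_eulerChar_mul (A := e ⟨A, hA⟩) ha,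
    eulerChar_relImplLat, ← hIci, mu_orderIso_apply]

/-- Let `A ∈ 𝒜` with least element `a`.  Then
`μ(A, B) = (−1)^{|a|} · |a|! · μ(A, [a,⊤])`, where `μ` is the Möbius function of the
finite lattice `𝒜` and `|a|` is the number of atoms of `B` below `a`. -/
theorem mu_top_eq_sign_factorial_mul {B : Type*} [Fintype B] [BooleanAlgebra B] [Nontrivial B]
    (A : Set B) (hA : IsImplSublattice A) (a : B) (ha : IsLeast A a) :
    IncidenceAlgebra.mu ℤ (⟨A, hA⟩ : ImplLat B) ⟨Set.univ, isImplSublattice_univ⟩ =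
      (-1 : ℤ) ^ natomsBelow a * (natomsBelow a).factorial *
        IncidenceAlgebra.mu ℤ (⟨A, hA⟩ : ImplLat B) ⟨Set.Ici a, isImplSublattice_Ici a⟩ :=
  mu_top_eq_sign_factorial_mul_general A hA a ha
end
end

section
/- Let A be an implication sublattice of B with least element a := min A. The interval [A, B] in the lattice 𝒜 is order-isomorphic to the product P₁ × P₂, where P₁ is the poset (under inclusion) of Boolean subalgebras of the Boolean algebra [a,1] = {x ∈ B : a ≤ x} that contain A, and P₂ is the poset (under inclusion) of implication sublattices of the Boolean algebra [0,a] = {x ∈ B : x ≤ a}. -/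
open scoped Classical

noncomputable section

/-- A Boolean subalgebra of the interval Boolean algebra `[a,⊤] = {x : a ≤ x}`:
a subset of `[a,⊤]` containing `a` and `⊤`, closed under `⊔`, `⊓` and the relative
complement `x ↦ xᶜ ⊔ a`. -/
def IsBoolSubalgebraIci {B : Type*} [BooleanAlgebra B] (a : B) (C : Set B) : Prop :=
  C ⊆ Set.Ici a ∧ a ∈ C ∧ (⊤ : B) ∈ C ∧ (∀ x ∈ C, ∀ y ∈ C, x ⊔ y ∈ C) ∧
    (∀ x ∈ C, ∀ y ∈ C, x ⊓ y ∈ C) ∧ (∀ x ∈ C, xᶜ ⊔ a ∈ C)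

/-- An implication sublattice of the interval Boolean algebra `[⊥,a] = {x : x ≤ a}`:
a nonempty subset of `[⊥,a]` closed under the relative implication
`x → y := (xᶜ ⊓ a) ⊔ y` and under `⊓`. -/
def IsImplSublatticeIic {B : Type*} [BooleanAlgebra B] (a : B) (C : Set B) : Prop :=
  C ⊆ Set.Iic a ∧ C.Nonempty ∧ (∀ x ∈ C, ∀ y ∈ C, (xᶜ ⊓ a) ⊔ y ∈ C) ∧
    (∀ x ∈ C, ∀ y ∈ C, x ⊓ y ∈ C)

/-! Every `x` splits into the part `x ⊔ a` above `a` and the part `x ⊓ a` below it, and is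
recovered from them as `(x ⊔ a) ⊓ (a → x ⊓ a)`. An implication sublattice `C` containing
`a = min A` is closed under joins (`x ⊔ y = (x → y) → y`), so its trace on `[a,⊤]` is a
Boolean subalgebra (relative complement `x → a`), its trace on `[⊥,a]` is an implication
sublattice, and `C` consists exactly of the `x` with both parts in the respective traces.
Conversely, any such pair of pieces glues back to an implication sublattice with those traces,
and both constructions are monotone. -/

section

variable {B : Type*} [BooleanAlgebra B] {a x y : B} {C C₁ C₂ : Set B}

lemma compl_sup_compl_sup_eq_sup (x y : B) : (xᶜ ⊔ y)ᶜ ⊔ y = x ⊔ y := by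
  rw [compl_sup, compl_compl, ← sdiff_eq, sdiff_sup_self]

lemma sup_inf_compl_sup_inf_eq (x a : B) : (x ⊔ a) ⊓ (aᶜ ⊔ x ⊓ a) = x := by
  rw [sup_inf_left, compl_sup_eq_top, inf_top_eq, sup_comm aᶜ, ← sup_inf_left, inf_compl_self,
    sup_bot_eq]

lemma compl_inf_sup_of_le (hy : y ≤ a) : (xᶜ ⊓ a) ⊔ y = (xᶜ ⊔ y) ⊓ a := by
  rw [sup_inf_right, sup_eq_left.mpr hy]

namespace IsImplSublattice

lemma sup_mem (hC : IsImplSublattice C) (hx : x ∈ C) (hy : y ∈ C) : x ⊔ y ∈ C := by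
  simpa only [compl_sup_compl_sup_eq_sup] using hC.2.1 _ (hC.2.1 x hx y hy) y hy

lemma top_mem (hC : IsImplSublattice C) (hx : x ∈ C) : ⊤ ∈ C := by
  simpa only [compl_sup_eq_top] using hC.2.1 x hx x hx

lemma mem_iff_sup_mem_and_inf_mem (hC : IsImplSublattice C) (ha : a ∈ C) :
    x ∈ C ↔ x ⊔ a ∈ C ∧ x ⊓ a ∈ C := by
  refine ⟨fun hx => ⟨hC.sup_mem hx ha, hC.2.2 x hx a ha⟩, fun ⟨hsup, hinf⟩ => ?_⟩
  simpa only [sup_inf_compl_sup_inf_eq] using hC.2.2 _ hsup _ (hC.2.1 a ha _ hinf)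

lemma isBoolSubalgebraIci_inter_Ici (hC : IsImplSublattice C) (ha : a ∈ C) :
    IsBoolSubalgebraIci a (C ∩ Set.Ici a) := by
  refine ⟨Set.inter_subset_right, ⟨ha, le_rfl⟩, ⟨hC.top_mem ha, le_top⟩, ?_, ?_, ?_⟩
  · rintro x ⟨hx, hax⟩ y ⟨hy, -⟩
    exact ⟨hC.sup_mem hx hy, le_sup_of_le_left hax⟩
  · rintro x ⟨hx, hax⟩ y ⟨hy, hay⟩
    exact ⟨hC.2.2 x hx y hy, le_inf hax hay⟩
  · rintro x ⟨hx, -⟩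
    exact ⟨hC.2.1 x hx a ha, le_sup_right⟩

lemma isImplSublatticeIic_inter_Iic (hC : IsImplSublattice C) (ha : a ∈ C) :
    IsImplSublatticeIic a (C ∩ Set.Iic a) := by
  refine ⟨Set.inter_subset_right, ⟨a, ha, le_rfl⟩, ?_, ?_⟩
  · rintro x ⟨hx, -⟩ y ⟨hy, hya⟩
    rw [compl_inf_sup_of_le hya]
    exact ⟨hC.2.2 _ (hC.2.1 x hx y hy) a ha, inf_le_right⟩
  · rintro x ⟨hx, hxa⟩ y ⟨hy, -⟩
    exact ⟨hC.2.2 x hx y hy, inf_le_of_left_le hxa⟩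

end IsImplSublattice

lemma IsImplSublatticeIic.top_mem (hC : IsImplSublatticeIic a C) : a ∈ C := by
  obtain ⟨x, hx⟩ := hC.2.1
  have hxa : x ≤ a := hC.1 hx
  simpa only [inf_comm, ← sdiff_eq, sdiff_sup_cancel hxa] using hC.2.2.1 x hx x hx

def ofParts (a : B) (C₁ C₂ : Set B) : Set B := {x | x ⊔ a ∈ C₁ ∧ x ⊓ a ∈ C₂}

lemma ofParts_mono {C₁' C₂' : Set B} (h₁ : C₁ ⊆ C₁') (h₂ : C₂ ⊆ C₂') :
    ofParts a C₁ C₂ ⊆ ofParts a C₁' C₂' :=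
  fun _ ⟨hx₁, hx₂⟩ => ⟨h₁ hx₁, h₂ hx₂⟩

lemma isImplSublattice_ofParts (h₁ : IsBoolSubalgebraIci a C₁) (h₂ : IsImplSublatticeIic a C₂) :
    IsImplSublattice (ofParts a C₁ C₂) := by
  have ha₂ : a ∈ C₂ := h₂.top_mem
  obtain ⟨-, ha₁, -, hsup₁, hinf₁, hcompl₁⟩ := h₁
  obtain ⟨-, -, himp₂, hinf₂⟩ := h₂
  refine ⟨⟨a, (sup_idem a).symm ▸ ha₁, (inf_idem a).symm ▸ ha₂⟩, ?_, ?_⟩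
  · rintro x ⟨hx₁, hx₂⟩ y ⟨hy₁, hy₂⟩
    constructor
    · have h : (x ⊔ a)ᶜ ⊔ a ⊔ (y ⊔ a) = (xᶜ ⊔ y) ⊔ a := by
        rw [compl_sup, ← sdiff_eq, sdiff_sup_self, sup_sup_sup_comm, sup_idem]
      exact h ▸ hsup₁ _ (hcompl₁ _ hx₁) _ hy₁
    · have h : (x ⊓ a)ᶜ ⊓ a ⊔ y ⊓ a = (xᶜ ⊔ y) ⊓ a := by
        rw [compl_inf, inf_sup_right, compl_inf_self, sup_bot_eq, ← inf_sup_right]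
      exact h ▸ himp₂ _ hx₂ _ hy₂
  · rintro x ⟨hx₁, hx₂⟩ y ⟨hy₁, hy₂⟩
    refine ⟨sup_inf_right x y a ▸ hinf₁ _ hx₁ _ hy₁, ?_⟩
    have h : x ⊓ a ⊓ (y ⊓ a) = x ⊓ y ⊓ a := by rw [inf_inf_inf_comm, inf_idem]
    exact h ▸ hinf₂ _ hx₂ _ hy₂

lemma IsImplSublattice.ofParts_inter_Ici_inter_Iic (hC : IsImplSublattice C) (ha : a ∈ C) :
    ofParts a (C ∩ Set.Ici a) (C ∩ Set.Iic a) = C := by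
  ext x
  rw [hC.mem_iff_sup_mem_and_inf_mem ha]
  exact ⟨fun ⟨⟨h₁, _⟩, ⟨h₂, _⟩⟩ => ⟨h₁, h₂⟩,
    fun ⟨h₁, h₂⟩ => ⟨⟨h₁, le_sup_right⟩, ⟨h₂, inf_le_right⟩⟩⟩

lemma subset_ofParts {A : Set B} (hA : A ⊆ Set.Ici a) (h₁ : A ⊆ C₁) (ha : a ∈ C₂) :
    A ⊆ ofParts a C₁ C₂ := fun _ hx =>
  ⟨(sup_eq_left.mpr (hA hx)).symm ▸ h₁ hx, (inf_eq_right.mpr (hA hx)).symm ▸ ha⟩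

lemma ofParts_inter_Ici (h₁ : C₁ ⊆ Set.Ici a) (ha : a ∈ C₂) :
    ofParts a C₁ C₂ ∩ Set.Ici a = C₁ :=
  Set.Subset.antisymm (fun _ ⟨⟨hx, _⟩, hax⟩ => sup_eq_left.mpr hax ▸ hx)
    (Set.subset_inter (subset_ofParts h₁ subset_rfl ha) h₁)

lemma ofParts_inter_Iic (ha : a ∈ C₁) (h₂ : C₂ ⊆ Set.Iic a) :
    ofParts a C₁ C₂ ∩ Set.Iic a = C₂ := by
  refine Set.Subset.antisymm (fun _ ⟨⟨_, hx⟩, hxa⟩ => inf_eq_left.mpr hxa ▸ hx) fun x hx => ?_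
  have hxa : x ≤ a := h₂ hx
  exact ⟨⟨(sup_eq_right.mpr hxa).symm ▸ ha, (inf_eq_left.mpr hxa).symm ▸ hx⟩, hxa⟩

end

theorem interval_orderIso_prod_general {B : Type*} [BooleanAlgebra B]
    (A : Set B) (a : B) (ha : IsLeast A a) :
    Nonempty ({C : ImplLat B // A ⊆ C.1} ≃o
      ({C : Set B // IsBoolSubalgebraIci a C ∧ A ⊆ C} ×
        {C : Set B // IsImplSublatticeIic a C})) := by
  have haC : ∀ C : {C : ImplLat B // A ⊆ C.1}, a ∈ C.1.1 := fun C => C.2 ha.1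
  refine ⟨{
    toFun := fun C =>
      (⟨C.1.1 ∩ Set.Ici a, C.1.2.isBoolSubalgebraIci_inter_Ici (haC C),
          Set.subset_inter C.2 ha.2⟩,
        ⟨C.1.1 ∩ Set.Iic a, C.1.2.isImplSublatticeIic_inter_Iic (haC C)⟩)
    invFun := fun p =>
      ⟨⟨ofParts a p.1.1 p.2.1, isImplSublattice_ofParts p.1.2.1 p.2.2⟩,
        subset_ofParts ha.2 p.1.2.2 p.2.2.top_mem⟩
    left_inv := fun C =>
      Subtype.ext (Subtype.ext (C.1.2.ofParts_inter_Ici_inter_Iic (haC C)))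
    right_inv := fun ⟨⟨C₁, h₁, _⟩, ⟨C₂, h₂⟩⟩ =>
      Prod.ext (Subtype.ext (ofParts_inter_Ici h₁.1 h₂.top_mem))
        (Subtype.ext (ofParts_inter_Iic h₁.2.1 h₂.1))
    map_rel_iff' := fun {C D} => by
      refine ⟨fun ⟨h₁, h₂⟩ => ?_, fun h => ⟨Set.inter_subset_inter_left _ h,
        Set.inter_subset_inter_left _ h⟩⟩
      change C.1.1 ⊆ D.1.1
      rw [← C.1.2.ofParts_inter_Ici_inter_Iic (haC C), ← D.1.2.ofParts_inter_Ici_inter_Iic (haC D)]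
      exact ofParts_mono h₁ h₂ }⟩

/-- Let `A ∈ 𝒜` with least element `a`.  The interval `[A, B]` of `𝒜`
is order-isomorphic to `P₁ × P₂`, where `P₁` is the poset of Boolean subalgebras of
`[a,⊤]` containing `A` and `P₂` is the poset of implication sublattices of `[⊥,a]`. -/
theorem interval_orderIso_prod {B : Type*} [Fintype B] [BooleanAlgebra B] [Nontrivial B]
    (A : Set B) (hA : IsImplSublattice A) (a : B) (ha : IsLeast A a) :
    Nonempty ({C : ImplLat B // A ⊆ C.1} ≃o
      ({C : Set B // IsBoolSubalgebraIci a C ∧ A ⊆ C} ×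
        {C : Set B // IsImplSublatticeIic a C})) :=
  interval_orderIso_prod_general A a ha
end
end

section
/- Let C₁ and C₂ be Boolean subalgebras of B, regarded as elements of 𝒜. Then the intervals [{1}, C₁] and [{1}, C₂] in 𝒜 are order-isomorphic if and only if C₁ and C₂ have the same number of atoms (equivalently, are isomorphic as Boolean algebras). -/
open scoped Classical

noncomputable section

/-- The atoms of a Boolean subalgebra `C` of `B`: the minimal elements of `C \ {⊥}`. -/
def subAtoms {B : Type*} [BooleanAlgebra B] [Fintype B] (C : Set B) : Finset B :=
  Finset.univ.filter fun d : B => d ∈ C ∧ d ≠ ⊥ ∧ ∀ x ∈ C, x ≠ ⊥ → x ≤ d → x = d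

/-! The interval `[{⊤}, C]` is isomorphic to the lattice of implication sublattices of `C`
itself, viewed as a Boolean algebra, so it only depends on the isomorphism type of `C`, which is
determined by its number `n` of atoms since `C` is the powerset of its atoms. Conversely, the
atoms of that lattice are the pairs `{x, ⊤}` with `x ≠ ⊤`, so the lattice determines
`|C| - 1 = 2 ^ n - 1`, hence `n`. -/

open Set

section ImplSublattice

variable {α β F : Type*} [BooleanAlgebra α] [BooleanAlgebra β]

lemma IsImplSublattice.top_mem_s12 {A : Set α} (hA : IsImplSublattice A) : ⊤ ∈ A := by
  obtain ⟨x, hx⟩ := hA.1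
  simpa using hA.2.1 x hx x hx

lemma IsImplSublattice.image [FunLike F α β] [BoundedLatticeHomClass F α β] (f : F)
    {A : Set α} (hA : IsImplSublattice A) : IsImplSublattice (f '' A) := by
  refine ⟨hA.1.image f, ?_, ?_⟩
  · rintro _ ⟨x, hx, rfl⟩ _ ⟨y, hy, rfl⟩
    exact ⟨xᶜ ⊔ y, hA.2.1 x hx y hy, by rw [map_sup, map_compl']⟩
  · rintro _ ⟨x, hx, rfl⟩ _ ⟨y, hy, rfl⟩
    exact ⟨x ⊓ y, hA.2.2 x hx y hy, map_inf f x y⟩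

lemma IsImplSublattice.preimage [FunLike F α β] [BoundedLatticeHomClass F α β] (f : F)
    {A : Set β} (hA : IsImplSublattice A) : IsImplSublattice (f ⁻¹' A) := by
  refine ⟨⟨⊤, by simpa using hA.top_mem_s12⟩, fun x hx y hy => ?_, fun x hx y hy => ?_⟩
  · simpa [map_compl'] using hA.2.1 _ hx _ hy
  · simpa using hA.2.2 _ hx _ hy

lemma isImplSublattice_pair (x : α) : IsImplSublattice ({x, ⊤} : Set α) := by
  refine ⟨insert_nonempty _ _, ?_, ?_⟩ <;> rintro _ (rfl | rfl) _ (rfl | rfl) <;> simp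

end ImplSublattice

namespace ImplLat

variable {α β : Type*} [BooleanAlgebra α] [BooleanAlgebra β]

instance : OrderBot (ImplLat α) where
  bot := ⟨{⊤}, singleton_nonempty _, by simp, by simp⟩
  bot_le A := singleton_subset_iff.2 A.2.top_mem_s12

def pair (x : α) : ImplLat α := ⟨{x, ⊤}, isImplSublattice_pair x⟩

lemma eq_bot_iff_subset {A : ImplLat α} : A = ⊥ ↔ (A : Set α) ⊆ {⊤} :=
  ⟨fun h => h ▸ subset_rfl, fun h => le_bot_iff.1 h⟩

lemma pair_ne_bot {x : α} (hx : x ≠ ⊤) : pair x ≠ ⊥ := by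
  simpa [eq_bot_iff_subset, pair] using hx

lemma injOn_pair : InjOn (pair : α → ImplLat α) {x | x ≠ ⊤} := by
  intro x hx y _ hxy
  have : x ∈ (pair y : Set α) := hxy ▸ mem_insert x _
  exact this.resolve_right hx

lemma isAtom_iff {A : ImplLat α} : IsAtom A ↔ ∃ x ≠ ⊤, A = pair x := by
  constructor
  · intro hA
    obtain ⟨x, hxA, hx⟩ : ∃ x ∈ (A : Set α), x ≠ ⊤ := by
      by_contra! h
      exact hA.1 (eq_bot_iff_subset.2 h)
    have hle : pair x ≤ A := insert_subset hxA (singleton_subset_iff.2 A.2.top_mem_s12)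
    exact ⟨x, hx, ((hA.le_iff.1 hle).resolve_left (pair_ne_bot hx)).symm⟩
  · rintro ⟨x, hx, rfl⟩
    refine ⟨pair_ne_bot hx, fun A hA => eq_bot_iff_subset.2 fun y hy => ?_⟩
    rcases hA.le hy with rfl | rfl
    · exact absurd (insert_subset hy (singleton_subset_iff.2 A.2.top_mem_s12)) hA.not_ge
    · rfl

lemma natCard_atoms_add_one [Finite α] :
    Nat.card {A : ImplLat α // IsAtom A} + 1 = Nat.card α := by
  have hbij : Function.Bijective fun x : {x : α // x ≠ ⊤} =>
      (⟨pair x.1, isAtom_iff.2 ⟨x.1, x.2, rfl⟩⟩ : {A : ImplLat α // IsAtom A}) := by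
    refine ⟨fun x y hxy => Subtype.ext (injOn_pair x.2 y.2 (congrArg Subtype.val hxy)), ?_⟩
    rintro ⟨A, hA⟩
    obtain ⟨x, hx, rfl⟩ := isAtom_iff.1 hA
    exact ⟨⟨x, hx⟩, rfl⟩
  rw [← Nat.card_eq_of_bijective _ hbij, ← Finite.card_option,
    Nat.card_congr (Equiv.optionSubtypeNe ⊤)]

lemma natCard_eq_of_orderIso [Finite α] [Finite β] (e : ImplLat α ≃o ImplLat β) :
    Nat.card α = Nat.card β := by
  have h := Nat.card_congr (e.toEquiv.subtypeEquiv fun A => (e.isAtom_iff A).symm)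
  have hα := natCard_atoms_add_one (α := α)
  have hβ := natCard_atoms_add_one (α := β)
  omega

def congr (e : α ≃o β) : ImplLat α ≃o ImplLat β where
  toFun A := ⟨e '' A.1, A.2.image e⟩
  invFun A := ⟨e.symm '' A.1, A.2.image e.symm⟩
  left_inv A := Subtype.ext (e.symm_image_image A.1)
  right_inv A := Subtype.ext (e.image_symm_image A.1)
  map_rel_iff' := image_subset_image_iff e.injective

end ImplLat

namespace BooleanAlgebra

open CompleteAtomicBooleanAlgebra

variable {α β : Type*} [BooleanAlgebra α] [BooleanAlgebra β]

lemma natCard_eq_two_pow_natCard_atoms [Finite α] :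
    Nat.card α = 2 ^ Nat.card {a : α // IsAtom a} := by
  have := Fintype.ofFinite α
  let := Fintype.toCompleteAtomicBooleanAlgebra α
  rw [Nat.card_congr toSetOfIsAtom.toEquiv, Nat.card_eq_fintype_card, Fintype.card_set,
    Nat.card_eq_fintype_card]

lemma nonempty_orderIso_of_natCard_atoms_eq [Finite α] [Finite β]
    (h : Nat.card {a : α // IsAtom a} = Nat.card {b : β // IsAtom b}) :
    Nonempty (α ≃o β) := by
  have := Fintype.ofFinite α
  have := Fintype.ofFinite β
  let := Fintype.toCompleteAtomicBooleanAlgebra α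
  let := Fintype.toCompleteAtomicBooleanAlgebra β
  obtain ⟨σ⟩ := (Finite.card_eq).1 h
  exact ⟨toSetOfIsAtom.trans (σ.toOrderIsoSet.trans toSetOfIsAtom.symm)⟩

end BooleanAlgebra

section BooleanSubalgebra

variable {B : Type*} [BooleanAlgebra B]

def IsBoolSubalgebra.toBooleanSubalgebra {C : Set B} (h : IsBoolSubalgebra C) :
    BooleanSubalgebra B where
  carrier := C
  supClosed' := h.2.2.1
  infClosed' := h.2.2.2.1
  compl_mem' := h.2.2.2.2 _
  bot_mem' := h.1

lemma IsBoolSubalgebra.coe_mem_subAtoms_iff [Fintype B] {C : Set B} (h : IsBoolSubalgebra C)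
    {a : h.toBooleanSubalgebra} : (a : B) ∈ subAtoms C ↔ IsAtom a := by
  simp only [subAtoms, Finset.mem_filter, Finset.mem_univ, true_and]
  constructor
  · rintro ⟨-, ha0, hmin⟩
    refine ⟨fun ha => ha0 (congrArg Subtype.val ha), fun b hb => ?_⟩
    by_contra hb0
    exact hb.ne (Subtype.ext (hmin b b.2 (fun hb' => hb0 (Subtype.ext hb')) hb.le))
  · intro ha
    refine ⟨a.2, fun h0 => ha.1 (Subtype.ext h0), fun x hx hx0 hxa => ?_⟩
    rcases ha.le_iff.1 (show (⟨x, hx⟩ : h.toBooleanSubalgebra) ≤ a from hxa) with hbot | heq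
    · exact absurd (congrArg Subtype.val hbot) hx0
    · exact congrArg Subtype.val heq

lemma IsBoolSubalgebra.card_subAtoms_eq_natCard_atoms [Fintype B] {C : Set B}
    (h : IsBoolSubalgebra C) :
    (subAtoms C).card = Nat.card {a : h.toBooleanSubalgebra // IsAtom a} := by
  rw [← Nat.card_eq_finsetCard]
  have hC {d : B} (hd : d ∈ subAtoms C) : d ∈ C := (Finset.mem_filter.1 hd).2.1
  exact Nat.card_congr ((Equiv.subtypeSubtypeEquivSubtype hC).symm.trans
    (Equiv.subtypeEquivRight fun _ => h.coe_mem_subAtoms_iff))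

def BooleanSubalgebra.implLatOrderIsoInterval (S : BooleanSubalgebra B) :
    ImplLat S ≃o {A : ImplLat B // {(⊤ : B)} ⊆ A.1 ∧ A.1 ⊆ S} where
  toFun A := ⟨⟨S.subtype '' A.1, A.2.image S.subtype⟩,
    singleton_subset_iff.2 ⟨⊤, A.2.top_mem_s12, TopHomClass.map_top S.subtype⟩,
    image_subset_iff.2 fun x _ => x.2⟩
  invFun A := ⟨S.subtype ⁻¹' A.1.1, A.1.2.preimage S.subtype⟩
  left_inv A := Subtype.ext (preimage_image_eq _ S.subtype_injective)
  right_inv A := Subtype.ext (Subtype.ext (image_preimage_eq_of_subset (by simpa using A.2.2)))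
  map_rel_iff' := image_subset_image_iff S.subtype_injective

end BooleanSubalgebra

theorem interval_orderIso_iff_card_atoms_eq_general {B : Type*} [Fintype B] [BooleanAlgebra B]
    (C₁ C₂ : Set B) (h₁ : IsBoolSubalgebra C₁) (h₂ : IsBoolSubalgebra C₂) :
    Nonempty ({C : ImplLat B // {(⊤ : B)} ⊆ C.1 ∧ C.1 ⊆ C₁} ≃o
        {C : ImplLat B // {(⊤ : B)} ⊆ C.1 ∧ C.1 ⊆ C₂}) ↔
      (subAtoms C₁).card = (subAtoms C₂).card := by
  let e₁ := h₁.toBooleanSubalgebra.implLatOrderIsoInterval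
  let e₂ := h₂.toBooleanSubalgebra.implLatOrderIsoInterval
  rw [h₁.card_subAtoms_eq_natCard_atoms, h₂.card_subAtoms_eq_natCard_atoms]
  constructor
  · rintro ⟨e⟩
    have hcard := ImplLat.natCard_eq_of_orderIso (e₁.trans (e.trans e₂.symm))
    rw [BooleanAlgebra.natCard_eq_two_pow_natCard_atoms (α := h₁.toBooleanSubalgebra),
      BooleanAlgebra.natCard_eq_two_pow_natCard_atoms (α := h₂.toBooleanSubalgebra)] at hcard
    exact Nat.pow_right_injective le_rfl hcard
  · intro h
    obtain ⟨φ⟩ := BooleanAlgebra.nonempty_orderIso_of_natCard_atoms_eq h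
    exact ⟨e₁.symm.trans ((ImplLat.congr φ).trans e₂)⟩

/-- Lemma `lem:isoUp`.  Let `C₁, C₂` be Boolean subalgebras of `B`.
The intervals `[{⊤}, C₁]` and `[{⊤}, C₂]` of `𝒜` are order-isomorphic iff `C₁` and `C₂`
have the same number of atoms (equivalently, are isomorphic Boolean algebras). -/
theorem interval_orderIso_iff_card_atoms_eq {B : Type*} [Fintype B] [BooleanAlgebra B]
    [Nontrivial B] (C₁ C₂ : Set B) (h₁ : IsBoolSubalgebra C₁) (h₂ : IsBoolSubalgebra C₂) :
    Nonempty ({C : ImplLat B // {(⊤ : B)} ⊆ C.1 ∧ C.1 ⊆ C₁} ≃o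
        {C : ImplLat B // {(⊤ : B)} ⊆ C.1 ∧ C.1 ⊆ C₂}) ↔
      (subAtoms C₁).card = (subAtoms C₂).card :=
  interval_orderIso_iff_card_atoms_eq_general C₁ C₂ h₁ h₂
end
end
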